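/- arXiv:2206.05947 — 4 statements merged into one kernel-verified Lean document; each statement's English description precedes it below -/
import Mathlib

section
/- (Jacobi's complementary minor formula) Let L ∈ ℝ^{n×n} be a non-singular matrix and I, J ⊆ [n] with |I| = |J|. Then det L[I,J] = (−1)^{Σ_{i∈I} i + Σ_{j∈J} j} · det L · det L^{−1}[J̄, Ī], where Ī = [n] \ I and J̄ = [n] \ J. -/
/-!
Order the rows as `I, Iᶜ` and the columns as `J, Jᶜ`, each block increasingly, turning `L` into a
block matrix `M` whose inverse is `L⁻¹` with rows ordered `J, Jᶜ` and columns `I, Iᶜ`. Multiplying `M` by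
`[[1, B'], [0, D']]`, the last block column of `M⁻¹` padded by the identity, gives the block
triangular `[[M₁₁, 0], [M₂₁, 1]]`, so `det M₁₁ = det M ⋅ det (M⁻¹)₂₂`. The row reordering is a
shuffle whose inversions are the pairs `j < i` with `i ∈ I`, `j ∉ I`; with 0-based indices there
are `∑_{i ∈ I} (i + 1) - (1 + ⋯ + |I|)` of them. Likewise for the columns, and the corrections
`1 + ⋯ + |I|` and `1 + ⋯ + |J|` are equal, so they cancel in the sign.
-/

open Matrix Finset Equiv Equiv.Perm

/-- Determinant of the (square) submatrix of `L` with rows `I` and columns `J`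
(both taken in increasing order), where `|I| = |J|`. -/
noncomputable def Matrix.minorDet {n : ℕ} (L : Matrix (Fin n) (Fin n) ℝ)
    (I J : Finset (Fin n)) (h : I.card = J.card) : ℝ :=
  Matrix.det (Matrix.of fun a b : Fin I.card =>
    L (I.orderIsoOfFin rfl a) (J.orderIsoOfFin h.symm b))

namespace Matrix

variable {R : Type*} [CommRing R] {α β : Type*} [Fintype α] [Fintype β] [DecidableEq α]
  [DecidableEq β]

theorem det_toBlocks₁₁_eq_det_mul_det_inv_toBlocks₂₂ (N : Matrix (α ⊕ β) (α ⊕ β) R)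
    (hN : IsUnit N.det) : N.toBlocks₁₁.det = N.det * N⁻¹.toBlocks₂₂.det := by
  have hNN : fromBlocks N.toBlocks₁₁ N.toBlocks₁₂ N.toBlocks₂₁ N.toBlocks₂₂ *
      fromBlocks N⁻¹.toBlocks₁₁ N⁻¹.toBlocks₁₂ N⁻¹.toBlocks₂₁ N⁻¹.toBlocks₂₂ =
      fromBlocks 1 0 0 1 := by
    rw [fromBlocks_toBlocks, fromBlocks_toBlocks, fromBlocks_one, mul_nonsing_inv N hN]
  obtain ⟨-, h₁₂, -, h₂₂⟩ := fromBlocks_inj.1 ((fromBlocks_multiply ..).symm.trans hNN)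
  have key : N * fromBlocks 1 N⁻¹.toBlocks₁₂ 0 N⁻¹.toBlocks₂₂ =
      fromBlocks N.toBlocks₁₁ 0 N.toBlocks₂₁ 1 := by
    nth_rw 1 [← fromBlocks_toBlocks N]
    simp [fromBlocks_multiply, h₁₂, h₂₂]
  simpa [det_fromBlocks_zero₂₁, det_fromBlocks_zero₁₂] using (congrArg det key).symm

theorem det_submatrix_equiv_equiv (A : Matrix β β R) (c : β ≃ α) (e f : α ≃ β) :
    (A.submatrix e f).det = ((sign (c.trans e) * sign (c.trans f) : ℤˣ) : R) * A.det := by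
  have hσ : f.symm.trans e = (c.trans f).symm.trans (c.trans e) := by ext; simp
  have h := det_reindex e.symm f.symm A
  rw [reindex_apply, symm_symm, symm_symm, hσ, sign_trans, sign_symm] at h
  rw [h, mul_comm (sign (c.trans e))]

theorem minorDet_compl_eq_det_toBlocks₂₂ {n k k' m : ℕ} (L : Matrix (Fin n) (Fin n) ℝ)
    {s t : Finset (Fin n)} (hs : #s = k) (hsc : #sᶜ = m) (ht : #t = k') (htc : #tᶜ = m)
    (hc : #sᶜ = #tᶜ) :
    minorDet L sᶜ tᶜ hc =
      (L.submatrix (finSumEquivOfFinset hs hsc) (finSumEquivOfFinset ht htc)).toBlocks₂₂.det := by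
  subst hsc
  rfl

end Matrix

namespace Equiv.Perm

variable {n : ℕ}

theorem sign_eq_neg_one_pow_card_inversions (σ : Perm (Fin n)) :
    sign σ = (-1) ^ #{p ∈ finPairsLT n | σ p.1 ≤ σ p.2} := by
  have hsignAux : sign σ = signAux σ := by
    refine swap_induction_on σ (by simp [signAux_one]) fun τ x y hxy ih => ?_
    rw [signAux_mul, signAux_swap hxy, sign_mul, sign_swap hxy, ih]
  rw [hsignAux, signAux, prod_ite, prod_const, prod_const_one, mul_one]

theorem card_inversions_of_shuffle (σ : Perm (Fin n)) (s : Finset (Fin n))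
    (hfirst : ∀ x y, σ x ∈ s → σ y ∉ s → x < y)
    (hmono : ∀ x y, x < y → (σ x ∈ s ↔ σ y ∈ s) → σ x < σ y) :
    #{p ∈ finPairsLT n | σ p.1 ≤ σ p.2} = #{p ∈ s ×ˢ sᶜ | p.2 < p.1} := by
  have hinv : ∀ x y, y < x → σ x ≤ σ y → σ y ∈ s ∧ σ x ∉ s := by
    intro x y hyx hle
    by_cases hy : σ y ∈ s <;> by_cases hx : σ x ∈ s
    · exact absurd (hmono y x hyx (iff_of_true hy hx)) hle.not_gt
    · exact ⟨hy, hx⟩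
    · exact absurd (hfirst x y hx hy) hyx.not_gt
    · exact absurd (hmono y x hyx (iff_of_false hy hx)) hle.not_gt
  refine card_nbij' (fun p => (σ p.2, σ p.1)) (fun q => ⟨σ.symm q.2, σ.symm q.1⟩)
    ?_ ?_ (fun _ _ => by simp) (fun _ _ => by simp)
  · rintro ⟨x, y⟩ hp
    simp only [coe_filter, mem_finPairsLT, Set.mem_ofPred_eq] at hp
    obtain ⟨hy, hx⟩ := hinv x y hp.1 hp.2
    simp [hy, hx, hp.2.lt_of_ne (σ.injective.ne hp.1.ne')]
  · rintro ⟨i, j⟩ hq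
    simp only [coe_filter, mem_product, mem_compl, Set.mem_ofPred_eq] at hq
    have hlt := hfirst (σ.symm i) (σ.symm j) (by simpa using hq.1.1) (by simpa using hq.1.2)
    simp [mem_finPairsLT, hlt, hq.2.le]

theorem sign_finSumEquivOfFinset {k m : ℕ} (s : Finset (Fin n)) (hk : #s = k) (hm : #sᶜ = m)
    (hn : n = k + m) :
    sign (((finCongr hn).trans finSumFinEquiv.symm).trans (finSumEquivOfFinset hk hm)) =
      (-1) ^ #{p ∈ s ×ˢ sᶜ | p.2 < p.1} := by
  set σ : Perm (Fin n) :=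
    ((finCongr hn).trans finSumFinEquiv.symm).trans (finSumEquivOfFinset hk hm)
  have hpos (x : Fin n) : (∃ a, x = (finCongr hn).symm (Fin.castAdd m a)) ∨
      ∃ b, x = (finCongr hn).symm (Fin.natAdd k b) := by
    obtain ⟨x, rfl⟩ := (finCongr hn).symm.surjective x
    induction x using Fin.addCases <;> simp
  have hl (a : Fin k) : σ ((finCongr hn).symm (Fin.castAdd m a)) = s.orderEmbOfFin hk a := by
    simp [σ]
  have hr (b : Fin m) : σ ((finCongr hn).symm (Fin.natAdd k b)) = sᶜ.orderEmbOfFin hm b := by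
    simp [σ]
  have hls (a : Fin k) : σ ((finCongr hn).symm (Fin.castAdd m a)) ∈ s :=
    hl a ▸ s.orderEmbOfFin_mem hk a
  have hrs (b : Fin m) : σ ((finCongr hn).symm (Fin.natAdd k b)) ∉ s :=
    hr b ▸ mem_compl.1 (sᶜ.orderEmbOfFin_mem hm b)
  rw [sign_eq_neg_one_pow_card_inversions, card_inversions_of_shuffle σ s]
  · intro x y hx hy
    rcases hpos x with ⟨a, rfl⟩ | ⟨b, rfl⟩
    · rcases hpos y with ⟨a', rfl⟩ | ⟨b', rfl⟩
      · exact absurd (hls a') hy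
      · simp only [finCongr_symm, finCongr_apply, Fin.lt_def, Fin.val_cast, Fin.val_castAdd,
          Fin.val_natAdd]
        omega
    · exact absurd hx (hrs b)
  · intro x y hxy hxys
    rcases hpos x with ⟨a, rfl⟩ | ⟨b, rfl⟩ <;> rcases hpos y with ⟨a', rfl⟩ | ⟨b', rfl⟩
    · rw [hl, hl]
      refine (s.orderEmbOfFin hk).strictMono ?_
      simpa only [finCongr_symm, finCongr_apply, Fin.lt_def, Fin.val_cast, Fin.val_castAdd]
        using hxy
    · exact absurd (hxys.1 (hls a)) (hrs b')
    · exact absurd (hxys.2 (hls a')) (hrs b)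
    · rw [hr, hr]
      refine (sᶜ.orderEmbOfFin hm).strictMono ?_
      simpa only [finCongr_symm, finCongr_apply, Fin.lt_def, Fin.val_cast, Fin.val_natAdd,
        add_lt_add_iff_left] using hxy

end Equiv.Perm

namespace Finset

theorem sum_card_filter_le {α : Type*} [LinearOrder α] (s : Finset α) :
    ∑ i ∈ s, #{j ∈ s | j ≤ i} = ∑ a ∈ range #s, (a + 1) := by
  induction s using induction_on_max with
  | empty => simp
  | insert a s has ih =>
    have ha : a ∉ s := fun h => (has a h).false
    rw [sum_insert ha, card_insert_of_notMem ha, sum_range_succ, ← ih, add_comm]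
    congr 1
    · refine sum_congr rfl fun i hi => ?_
      rw [filter_insert, if_neg (has i hi).not_ge]
    · rw [filter_insert, if_pos le_rfl, filter_true_of_mem fun j hj => (has j hj).le,
        card_insert_of_notMem ha]

theorem card_inversions_add_sum_range {n : ℕ} (s : Finset (Fin n)) :
    #{p ∈ s ×ˢ sᶜ | p.2 < p.1} + ∑ a ∈ range #s, (a + 1) = ∑ i ∈ s, ((i : ℕ) + 1) := by
  rw [← sum_card_filter_le, card_filter, sum_product, ← sum_add_distrib]
  refine sum_congr rfl fun i hi => ?_
  rw [← card_filter, ← Fin.card_Iic, ← card_union_of_disjoint]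
  · congr 1
    ext j
    simp only [mem_union, mem_filter, mem_compl, mem_Iic]
    by_cases hj : j ∈ s
    · simp [hj]
    · simp [hj, le_iff_lt_or_eq, ne_of_mem_of_not_mem hi hj |>.symm]
  · exact disjoint_filter_filter disjoint_compl_left

end Finset

/-- Jacobi's complementary minor formula:
`det L[I,J] = (−1)^{Σ_{i∈I} i + Σ_{j∈J} j} ⋅ det L ⋅ det L⁻¹[J̄, Ī]`
(indices counted 1-based, as in `[n] = {1, …, n}`). -/
theorem stmt_1 {n : ℕ} (L : Matrix (Fin n) (Fin n) ℝ) (hL : IsUnit L.det)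
    (I J : Finset (Fin n)) (h : I.card = J.card)
    (hc : Jᶜ.card = Iᶜ.card) :
    Matrix.minorDet L I J h =
      (-1 : ℝ) ^ ((∑ i ∈ I, ((i : ℕ) + 1)) + ∑ j ∈ J, ((j : ℕ) + 1)) *
        L.det * Matrix.minorDet L⁻¹ Jᶜ Iᶜ hc := by
  have hn : n = #I + #Iᶜ := by simp [card_add_card_compl]
  rw [minorDet_compl_eq_det_toBlocks₂₂ L⁻¹ h.symm hc rfl rfl, ← inv_submatrix_equiv,
    show minorDet L I J h = (L.submatrix (finSumEquivOfFinset rfl rfl)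
      (finSumEquivOfFinset h.symm hc)).toBlocks₁₁.det from rfl]
  set M := L.submatrix (finSumEquivOfFinset (s := I) rfl rfl) (finSumEquivOfFinset h.symm hc)
  have hM : M.det =
      (-1) ^ #{p ∈ I ×ˢ Iᶜ | p.2 < p.1} * (-1) ^ #{p ∈ J ×ˢ Jᶜ | p.2 < p.1} * L.det := by
    rw [det_submatrix_equiv_equiv L ((finCongr hn).trans finSumFinEquiv.symm),
      sign_finSumEquivOfFinset, sign_finSumEquivOfFinset]
    norm_cast
  have hMunit : IsUnit M.det := by
    rw [hM]
    exact ((isUnit_neg_one.pow _).mul (isUnit_neg_one.pow _)).mul hL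
  have hI := card_inversions_add_sum_range I
  have hJ := card_inversions_add_sum_range J
  rw [← h] at hJ
  rw [det_toBlocks₁₁_eq_det_mul_det_inv_toBlocks₂₂ M hMunit, hM, ← hI, ← hJ, add_add_add_comm,
    pow_add, ← two_mul, pow_mul, neg_one_sq, one_pow, mul_one, pow_add]
end

section
/- Let L ∈ ℝ^{n×n} be positive semidefinite. Then the set function f(S) = log det L[S] (with values in ℝ ∪ {−∞}, where log 0 = −∞ and det L[∅] = 1) is submodular: for all S ⊆ T ⊆ [n] and i ∉ T, f(S ∪ {i}) − f(S) ≥ f(T ∪ {i}) − f(T). -/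
/-
For `L[X]` invertible and `i ∉ X`, the Schur complement formula gives
`det L[insert i X] = det L[X] * s_X`, where `s_X = L i i - L[i, X] L[X]⁻¹ L[X, i]` is the minimum
of `xᵀ L x` over the vectors `x` supported in `insert i X` with `x i = 1`. Enlarging `X` enlarges
the set of competitors, so `s_T ≤ s_S` for `S ⊆ T`, which is the claim after taking logarithms.
If `det L[insert i T] = 0` the left-hand side is `⊥`; otherwise `L[insert i T]` is positive
definite, and so are its principal submatrices `L[S]` and `L[T]`.
-/

/-- Principal submatrix of `L` indexed by the finset `S`. -/
def Matrix.psub {n : ℕ} (L : Matrix (Fin n) (Fin n) ℝ) (S : Finset (Fin n)) :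
    Matrix S S ℝ := Matrix.of fun i j => L i j

/-- Determinant of the principal submatrix (with `det L[∅] = 1`). -/
noncomputable def Matrix.pdet {n : ℕ} (L : Matrix (Fin n) (Fin n) ℝ) (S : Finset (Fin n)) : ℝ :=
  (Matrix.psub L S).det

/-- Extended-real logarithm: `elog x = log x` for `x > 0` and `elog x = −∞` otherwise
(so `log 0 = −∞`). -/
noncomputable def elog (x : ℝ) : EReal := if x ≤ 0 then ⊥ else ((Real.log x : ℝ) : EReal)

section ZeroExtension

open Matrix

variable {ι R : Type*} [CommSemiring R] {X : Finset ι}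

lemma extend_val_zero_apply_of_notMem (v : X → R) {k : ι} (hk : k ∉ X) :
    Subtype.val.extend v 0 k = 0 :=
  Function.extend_apply' _ _ _ fun ⟨a, ha⟩ => hk (ha ▸ a.2)

variable [Fintype ι]

lemma dotProduct_extend_val_zero (y : ι → R) (v : X → R) :
    y ⬝ᵥ Subtype.val.extend v 0 = (y ∘ (↑)) ⬝ᵥ v := by
  rw [dotProduct, ← Finset.sum_subset X.subset_univ fun k _ hk => by
    rw [extend_val_zero_apply_of_notMem v hk, mul_zero], ← Finset.sum_coe_sort]
  simp only [Subtype.val_injective.extend_apply]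
  rfl

lemma extend_val_zero_dotProduct (v : X → R) (y : ι → R) :
    Subtype.val.extend v 0 ⬝ᵥ y = v ⬝ᵥ (y ∘ (↑)) := by
  rw [dotProduct_comm, dotProduct_extend_val_zero, dotProduct_comm]

lemma mulVec_extend_val_zero_comp_val (L : Matrix ι ι R) (v : X → R) :
    (L *ᵥ Subtype.val.extend v 0) ∘ (↑) = L.submatrix ((↑) : X → ι) (↑) *ᵥ v :=
  funext fun _ => dotProduct_extend_val_zero _ v

end ZeroExtension

namespace Matrix

lemma PosSemidef.dotProduct_mulVec_le_add {ι : Type*} [Fintype ι]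
    {L : Matrix ι ι ℝ} (hL : L.PosSemidef) {u d : ι → ℝ} (h : d ⬝ᵥ (L *ᵥ u) = 0) :
    u ⬝ᵥ (L *ᵥ u) ≤ (u + d) ⬝ᵥ (L *ᵥ (u + d)) := by
  have hsymm : u ⬝ᵥ (L *ᵥ d) = d ⬝ᵥ (L *ᵥ u) := by
    rw [dotProduct_mulVec, ← mulVec_transpose, (isHermitian_iff_isSymm.mp hL.1).eq,
      dotProduct_comm]
  have hd : 0 ≤ d ⬝ᵥ (L *ᵥ d) := by simpa using hL.dotProduct_mulVec_nonneg d
  rw [mulVec_add, add_dotProduct, dotProduct_add, dotProduct_add, hsymm, h]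
  linarith

variable {n : ℕ} {L : Matrix (Fin n) (Fin n) ℝ} {X : Finset (Fin n)}

lemma psub_eq_submatrix (L : Matrix (Fin n) (Fin n) ℝ) (X : Finset (Fin n)) :
    L.psub X = L.submatrix (↑) (↑) :=
  rfl

noncomputable def schurComplementAt (L : Matrix (Fin n) (Fin n) ℝ) (X : Finset (Fin n))
    (i : Fin n) : ℝ :=
  L i i - (fun j : X => L i j) ⬝ᵥ ((L.psub X)⁻¹ *ᵥ fun j : X => L j i)

/-- The minimiser of `x ↦ xᵀ L x` over the `x` supported in `insert i X` with `x i = 1`. -/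
noncomputable def schurVector (L : Matrix (Fin n) (Fin n) ℝ) (X : Finset (Fin n)) (i : Fin n) :
    Fin n → ℝ :=
  Pi.single i 1 - Subtype.val.extend ((L.psub X)⁻¹ *ᵥ fun j : X => L j i) 0

lemma mulVec_schurVector_apply_of_mem (hX : IsUnit (L.psub X).det) (i : Fin n) {k : Fin n}
    (hk : k ∈ X) : (L *ᵥ schurVector L X i) k = 0 := by
  have hext := congrFun
    (mulVec_extend_val_zero_comp_val L ((L.psub X)⁻¹ *ᵥ fun j : X => L j i)) ⟨k, hk⟩
  rw [Function.comp_apply, ← psub_eq_submatrix, mulVec_mulVec, mul_nonsing_inv _ hX,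
    one_mulVec] at hext
  rw [schurVector, mulVec_sub, Pi.sub_apply, mulVec_single_one, hext]
  exact sub_self _

lemma schurVector_dotProduct_mulVec (hX : IsUnit (L.psub X).det) (i : Fin n) :
    schurVector L X i ⬝ᵥ (L *ᵥ schurVector L X i) = schurComplementAt L X i := by
  set u := schurVector L X i
  set z := Subtype.val.extend ((L.psub X)⁻¹ *ᵥ fun j : X => L j i) 0
  have hu : u = Pi.single i 1 - z := rfl
  have horth : z ⬝ᵥ (L *ᵥ u) = 0 := by
    rw [extend_val_zero_dotProduct]
    exact Finset.sum_eq_zero fun j _ => by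
      rw [Function.comp_apply, mulVec_schurVector_apply_of_mem hX i j.2, mul_zero]
  calc u ⬝ᵥ (L *ᵥ u) = Pi.single i 1 ⬝ᵥ (L *ᵥ u) - z ⬝ᵥ (L *ᵥ u) := by
        nth_rw 1 [hu]; exact sub_dotProduct _ _ _
    _ = (L *ᵥ u) i := by rw [horth, sub_zero, single_one_dotProduct]
    _ = L i i - (fun k => L i k) ⬝ᵥ z := by
        rw [hu, mulVec_sub, Pi.sub_apply, mulVec_single_one]; rfl
    _ = schurComplementAt L X i := by rw [dotProduct_extend_val_zero]; rfl

lemma schurComplementAt_le_of_subset (hL : L.PosSemidef) {S T : Finset (Fin n)} (hST : S ⊆ T)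
    (hS : IsUnit (L.psub S).det) (hT : IsUnit (L.psub T).det) (i : Fin n) :
    schurComplementAt L T i ≤ schurComplementAt L S i := by
  set zS := Subtype.val.extend ((L.psub S)⁻¹ *ᵥ fun j : S => L j i) 0
  set zT := Subtype.val.extend ((L.psub T)⁻¹ *ᵥ fun j : T => L j i) 0
  have hsplit : schurVector L S i = schurVector L T i + (zT - zS) := by
    simp only [schurVector, zS, zT]; abel
  have horth : (zT - zS) ⬝ᵥ (L *ᵥ schurVector L T i) = 0 := by
    refine Finset.sum_eq_zero fun k _ => ?_
    by_cases hk : k ∈ T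
    · rw [mulVec_schurVector_apply_of_mem hT i hk, mul_zero]
    · have hzT : zT k = 0 := extend_val_zero_apply_of_notMem _ hk
      have hzS : zS k = 0 := extend_val_zero_apply_of_notMem _ fun h => hk (hST h)
      rw [Pi.sub_apply, hzT, hzS, sub_zero, zero_mul]
  rw [← schurVector_dotProduct_mulVec hT, ← schurVector_dotProduct_mulVec hS, hsplit]
  exact hL.dotProduct_mulVec_le_add horth

lemma pdet_insert (L : Matrix (Fin n) (Fin n) ℝ) {i : Fin n} (hi : i ∉ X)
    (hX : IsUnit (L.psub X).det) :
    L.pdet (insert i X) = L.pdet X * schurComplementAt L X i := by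
  have : Invertible (L.psub X) := invertibleOfIsUnitDet _ hX
  let e : {x // x ∈ insert i X} ≃ ({x // x ∈ X} ⊕ Unit) :=
    (Finset.subtypeInsertEquivOption hi).trans (Equiv.optionEquivSumPUnit _)
  have hblock : (L.psub (insert i X)).submatrix e.symm e.symm =
      fromBlocks (L.psub X) (of fun (j : X) (_ : Unit) => L j i)
        (of fun (_ : Unit) (j : X) => L i j) (of fun (_ : Unit) (_ : Unit) => L i i) := by
    ext (a | a) (b | b) <;> rfl
  unfold pdet
  rw [← det_submatrix_equiv_self e.symm, hblock, det_fromBlocks₁₁, det_unique (n := Unit)]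
  congr 1
  simp only [sub_apply, of_apply, invOf_eq_nonsing_inv, schurComplementAt, mul_apply,
    mulVec, dotProduct, Finset.sum_mul, Finset.mul_sum]
  rw [Finset.sum_comm]
  exact congrArg _ (Finset.sum_congr rfl fun j _ => Finset.sum_congr rfl fun k _ => by ring)

lemma PosSemidef.posDef_psub_of_pdet_ne_zero (hL : L.PosSemidef) (h : L.pdet X ≠ 0) :
    (L.psub X).PosDef :=
  (hL.submatrix _).posDef_iff_isUnit.mpr ((isUnit_iff_isUnit_det _).mpr h.isUnit)

lemma PosDef.psub_of_subset {S T : Finset (Fin n)} (hT : (L.psub T).PosDef) (hST : S ⊆ T) :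
    (L.psub S).PosDef :=
  hT.submatrix (e := fun j : S => ⟨j, hST j.2⟩) fun _ _ h => Subtype.ext (Subtype.mk.inj h)

end Matrix

lemma elog_mul_sub_elog {a b : ℝ} (ha : 0 < a) (hb : 0 < b) :
    elog (a * b) - elog a = (Real.log b : EReal) := by
  rw [elog, if_neg (mul_pos ha hb).not_ge, elog, if_neg ha.not_ge, ← EReal.coe_sub,
    Real.log_mul ha.ne' hb.ne', add_sub_cancel_left]

/-- The set function `f(S) = log det L[S]`, valued in `ℝ ∪ {−∞}`, is submodular for a
positive semidefinite `L`. -/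
theorem stmt_3 {n : ℕ} (L : Matrix (Fin n) (Fin n) ℝ) (hL : L.PosSemidef)
    (f : Finset (Fin n) → EReal) (hf : ∀ S, f S = elog (Matrix.pdet L S))
    (S T : Finset (Fin n)) (hST : S ⊆ T) (i : Fin n) (hi : i ∉ T) :
    f (insert i T) - f T ≤ f (insert i S) - f S := by
  simp only [hf]
  by_cases hTi : L.pdet (insert i T) ≤ 0
  · rw [elog, if_pos hTi, EReal.bot_sub]
    exact bot_le
  have hTi_pd := hL.posDef_psub_of_pdet_ne_zero (not_le.mp hTi).ne'
  have hT : 0 < L.pdet T := (hTi_pd.psub_of_subset (Finset.subset_insert i T)).det_pos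
  have hS : 0 < L.pdet S :=
    (hTi_pd.psub_of_subset (hST.trans (Finset.subset_insert i T))).det_pos
  have hanti := Matrix.schurComplementAt_le_of_subset hL hST hS.ne'.isUnit hT.ne'.isUnit i
  rw [Matrix.pdet_insert L hi hT.ne'.isUnit] at hTi ⊢
  rw [Matrix.pdet_insert L (fun h => hi (hST h)) hS.ne'.isUnit]
  have hsT : 0 < L.schurComplementAt T i := pos_of_mul_pos_right (not_le.mp hTi) hT.le
  rw [elog_mul_sub_elog hT hsT, elog_mul_sub_elog hS (hsT.trans_le hanti)]
  exact EReal.coe_le_coe_iff.mpr (Real.log_le_log hsT hanti)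
end

section
/- Let L ∈ ℝ^{n×n} be positive definite and let T ⊆ [n] with i ∈ T. Then f(T \ {i}) − f(T) = log det L^{−1}[(([n]\T) ∪ {i})] − log det L^{−1}[[n]\T], where f(S) = log det L[S]. -/
namespace Matrix

theorem det_toBlocks₁₁_inv {K m o : Type*} [Field K] [Fintype m] [Fintype o] [DecidableEq m]
    [DecidableEq o] (M : Matrix (m ⊕ o) (m ⊕ o) K) (hM : M.det ≠ 0) (hD : M.toBlocks₂₂.det ≠ 0) :
    (M⁻¹).toBlocks₁₁.det = M.toBlocks₂₂.det / M.det := by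
  rw [← fromBlocks_toBlocks M] at hM ⊢
  set A := M.toBlocks₁₁
  set B := M.toBlocks₁₂
  set C := M.toBlocks₂₁
  set D := M.toBlocks₂₂
  let _ := D.invertibleOfIsUnitDet (isUnit_iff_ne_zero.2 hD)
  let _ := (fromBlocks A B C D).invertibleOfIsUnitDet (isUnit_iff_ne_zero.2 hM)
  let _ := invertibleOfFromBlocks₂₂Invertible A B C D
  rw [← invOf_eq_nonsing_inv, invOf_fromBlocks₂₂_eq, toBlocks_fromBlocks₁₁, invOf_eq_nonsing_inv,
    det_nonsing_inv, Ring.inverse_eq_inv', det_fromBlocks₂₂, toBlocks_fromBlocks₂₂]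
  have hS : (A - B * ⅟D * C).det ≠ 0 := (isUnit_det_of_invertible _).ne_zero
  field_simp

theorem pdet_pos {n : ℕ} {L : Matrix (Fin n) (Fin n) ℝ} (hL : L.PosDef) (S : Finset (Fin n)) :
    0 < L.pdet S :=
  (hL.submatrix Subtype.val_injective).det_pos

/-- Jacobi's complementary minor identity for principal minors. -/
theorem pdet_inv {n : ℕ} (L : Matrix (Fin n) (Fin n) ℝ) (S : Finset (Fin n)) (hL : L.det ≠ 0)
    (hS : L.pdet Sᶜ ≠ 0) : L⁻¹.pdet S = L.pdet Sᶜ / L.det := by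
  let e : S ⊕ ↥Sᶜ ≃ Fin n :=
    (Equiv.sumCongr (Equiv.refl S) (Equiv.subtypeEquivRight fun _ => Finset.mem_compl)).trans
      (Equiv.sumCompl (· ∈ S))
  have h := det_toBlocks₁₁_inv (L.submatrix e e) (by rwa [det_submatrix_equiv_self]) hS
  rwa [inv_submatrix_equiv, det_submatrix_equiv_self] at h

theorem log_pdet_inv_compl {n : ℕ} {L : Matrix (Fin n) (Fin n) ℝ} (hL : L.PosDef)
    (S : Finset (Fin n)) : Real.log (L⁻¹.pdet Sᶜ) = Real.log (L.pdet S) - Real.log L.det := by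
  rw [pdet_inv L Sᶜ hL.det_pos.ne' (by simpa using (pdet_pos hL S).ne'), compl_compl,
    Real.log_div (pdet_pos hL S).ne' hL.det_pos.ne']

end Matrix

theorem stmt_11_general {n : ℕ} (L : Matrix (Fin n) (Fin n) ℝ) (hL : L.PosDef)
    (f : Finset (Fin n) → ℝ) (hf : ∀ S, f S = Real.log (Matrix.pdet L S))
    (T : Finset (Fin n)) (i : Fin n) :
    f (T.erase i) - f T =
      Real.log (Matrix.pdet L⁻¹ (insert i Tᶜ)) - Real.log (Matrix.pdet L⁻¹ Tᶜ) := by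
  rw [← Finset.compl_erase, Matrix.log_pdet_inv_compl hL, Matrix.log_pdet_inv_compl hL, hf, hf]
  ring

/-- `f(T \ {i}) − f(T) = g((([n]\T) ∪ {i})) − g([n]\T)` where `f(S) = log det L[S]` and
`g(S) = log det L⁻¹[S]`. -/
theorem stmt_11 {n : ℕ} (L : Matrix (Fin n) (Fin n) ℝ) (hL : L.PosDef)
    (f : Finset (Fin n) → ℝ) (hf : ∀ S, f S = Real.log (Matrix.pdet L S))
    (T : Finset (Fin n)) (i : Fin n) (hi : i ∈ T) :
    f (T.erase i) - f T =
      Real.log (Matrix.pdet L⁻¹ (insert i Tᶜ)) - Real.log (Matrix.pdet L⁻¹ Tᶜ) :=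
  stmt_11_general L hL f hf T i
end

section
/- Let L ∈ ℝ^{n×n} be positive semidefinite, S ⊆ [n], and i, j ∉ S with i ≠ j. If det L[S] > 0, then det L[S∪{i}] · det L[S∪{j}] ≥ det L[S] · det L[S∪{i,j}] (Koteljanskii/log-submodularity inequality for principal minors). -/
/-!
With `s` the Schur complement of `L[S]` in `L`, the Schur determinant formula gives
`det L[S ∪ T] = det L[S] · det s[T]` for every `T` disjoint from `S`. Taking `T = {i}`, `{j}` and
`{i, j}`, the inequality becomes `p² (s_ii s_jj - s_ij²) ≤ p² s_ii s_jj` with `p = det L[S]`,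
which holds because `s` is symmetric.
-/

namespace Matrix

variable {n : ℕ}

noncomputable def schurCompl (L : Matrix (Fin n) (Fin n) ℝ) (S : Finset (Fin n)) :
    Matrix (Fin n) (Fin n) ℝ :=
  L - L.submatrix id ((↑) : S → Fin n) * (L.psub S)⁻¹ * L.submatrix ((↑) : S → Fin n) id

theorem pdet_eq_det_submatrix_equiv (L : Matrix (Fin n) (Fin n) ℝ) {S : Finset (Fin n)}
    {m : Type*} [Fintype m] [DecidableEq m] (e : m ≃ S) :
    L.pdet S = (L.submatrix (fun x => (e x : Fin n)) (fun x => e x)).det := by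
  rw [pdet, ← det_submatrix_equiv_self e]
  rfl

theorem pdet_union (L : Matrix (Fin n) (Fin n) ℝ) {S T : Finset (Fin n)} (hST : Disjoint S T)
    (hS : L.pdet S ≠ 0) :
    L.pdet (S ∪ T) = L.pdet S * (L.schurCompl S).pdet T := by
  have : Invertible (L.psub S) := invertibleOfIsUnitDet _ (isUnit_iff_ne_zero.2 hS)
  have hblocks : L.submatrix (fun x => (Equiv.Finset.union S T hST x : Fin n))
      (fun x => Equiv.Finset.union S T hST x) =
      fromBlocks (L.psub S) (L.submatrix Subtype.val Subtype.val)
        (L.submatrix Subtype.val Subtype.val) (L.psub T) := by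
    ext (k | k) (l | l) <;> rfl
  rw [pdet_eq_det_submatrix_equiv L (Equiv.Finset.union S T hST), hblocks,
    det_fromBlocks₁₁, invOf_eq_nonsing_inv, pdet, pdet]
  rfl

theorem pdet_singleton (M : Matrix (Fin n) (Fin n) ℝ) (a : Fin n) : M.pdet {a} = M a a :=
  det_unique _

theorem pdet_pair (M : Matrix (Fin n) (Fin n) ℝ) {i j : Fin n} (hij : i ≠ j) :
    M.pdet {i, j} = M i i * M j j - M i j * M j i := by
  have hmem : ∀ k, ![i, j] k ∈ ({i, j} : Finset (Fin n)) := by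
    intro k; fin_cases k <;> simp
  have hinj : Function.Injective ![i, j] := by
    intro a b h; fin_cases a <;> fin_cases b <;> simp_all [eq_comm]
  let e : Fin 2 ≃ ({i, j} : Finset (Fin n)) :=
    Equiv.ofBijective (fun k => ⟨![i, j] k, hmem k⟩) <| by
      rw [Fintype.bijective_iff_injective_and_card, Fintype.card_coe, Finset.card_pair hij]
      exact ⟨fun a b h => hinj (congrArg Subtype.val h), rfl⟩
  rw [pdet_eq_det_submatrix_equiv M e, det_fin_two]
  rfl

theorem isSymm_schurCompl {L : Matrix (Fin n) (Fin n) ℝ} (hL : L.IsSymm) (S : Finset (Fin n)) :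
    (L.schurCompl S).IsSymm := by
  have hS : (L.psub S)ᵀ = L.psub S := (hL.submatrix _).eq
  have hB : (L.submatrix id (Subtype.val : S → Fin n))ᵀ = L.submatrix Subtype.val id := by
    rw [transpose_submatrix, hL.eq]
  unfold schurCompl
  refine hL.sub ?_
  rw [IsSymm, transpose_mul, transpose_mul, transpose_nonsing_inv, hS, hB, ← hB,
    transpose_transpose, Matrix.mul_assoc]

end Matrix

open Matrix

/-- Koteljanskii / log-submodularity inequality for principal minors of a positive
semidefinite matrix. -/
theorem stmt_17 {n : ℕ} (L : Matrix (Fin n) (Fin n) ℝ) (hL : L.PosSemidef)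
    (S : Finset (Fin n)) (i j : Fin n) (hi : i ∉ S) (hj : j ∉ S) (hij : i ≠ j)
    (hpos : 0 < Matrix.pdet L S) :
    Matrix.pdet L S * Matrix.pdet L (insert i (insert j S)) ≤
      Matrix.pdet L (insert i S) * Matrix.pdet L (insert j S) := by
  set s := L.schurCompl S
  have hs : s.IsSymm := isSymm_schurCompl (isHermitian_iff_isSymm.1 hL.isHermitian) S
  have hone : ∀ a ∉ S, L.pdet (insert a S) = L.pdet S * s a a := fun a ha => by
    rw [Finset.insert_eq, Finset.union_comm,
      pdet_union L (Finset.disjoint_singleton_right.2 ha) hpos.ne', pdet_singleton]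
  have htwo : L.pdet (insert i (insert j S)) = L.pdet S * (s i i * s j j - s i j * s i j) := by
    rw [show insert i (insert j S) = S ∪ {i, j} by ext; simp,
      pdet_union L (by simp [hi, hj]) hpos.ne', pdet_pair s hij, hs.apply i j]
  rw [hone i hi, hone j hj, htwo]
  nlinarith [mul_self_nonneg (L.pdet S * s i j)]
end
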